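/- If μ(gT, 3) ≤ g·μ(T, 3) ≤ g(d²+1)|_{d=3} = 10g and μ(gT, 3) ≥ 2g, then lim_{g→∞} 2g/μ(gT, 3) exists only within [1/5, 1]; but using self-dual K_s embeddings with n = s(s−1)/2 edges in genus g_s with 2g_s = (s−1)(s−4)/2 and distance 3, one gets lim sup over this family of 2g/n = 1, hence lim_{g→∞} 2g/μ(gT, 3) = 1. -/

import Mathlib

/-!
By Fekete's lemma the subadditive sequence `μ g / g` converges, so its limit can be read off
along any subsequence of genera tending to infinity. Along the genera `g = k (4k - 3)` of the
self-dual embeddings of `K_{4k+1}` the ratio is squeezed between `2` and `2 + 8 / k`, hence the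
limit is `2` and `2g / μ g → 1`.
-/

open Filter Topology

theorem Subadditive.tendsto_div_of_tendsto_comp {u : ℕ → ℝ} (h : Subadditive u)
    (hbdd : BddBelow (Set.range fun n => u n / n)) {φ : ℕ → ℕ} (hφ : Tendsto φ atTop atTop)
    {c : ℝ} (hc : Tendsto (fun k => u (φ k) / φ k) atTop (𝓝 c)) :
    Tendsto (fun n => u n / n) atTop (𝓝 c) := by
  have hlim := h.tendsto_lim hbdd
  rwa [tendsto_nhds_unique (hlim.comp hφ) hc] at hlim

/-- The genus `(s - 1)(s - 4)/4` of the self-dual embedding of `K_s`, at `s = 4k + 1`. -/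
def selfDualGenus (k : ℕ) : ℕ := k * (4 * k - 3)

lemma mul_self_le_selfDualGenus (k : ℕ) : k * k ≤ selfDualGenus k := by
  rcases k with _ | k
  · simp [selfDualGenus]
  · exact Nat.mul_le_mul_left _ (by omega)

lemma tendsto_selfDualGenus : Tendsto selfDualGenus atTop atTop :=
  tendsto_atTop_mono (fun k => (Nat.le_mul_self k).trans (mul_self_le_selfDualGenus k)) tendsto_id

lemma apply_selfDualGenus_le (μ : ℕ → ℕ)
    (hK : ∀ s : ℕ, s % 4 = 1 → 5 ≤ s → μ ((s - 1) * (s - 4) / 4) ≤ s * (s - 1) / 2)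
    {k : ℕ} (hk : 1 ≤ k) : μ (selfDualGenus k) ≤ 2 * selfDualGenus k + 8 * k := by
  have hgenus : (4 * k + 1 - 1) * (4 * k + 1 - 4) / 4 = selfDualGenus k := by
    rw [selfDualGenus, show 4 * k + 1 - 4 = 4 * k - 3 by omega, Nat.add_sub_cancel,
      mul_assoc, Nat.mul_div_cancel_left _ (by norm_num)]
  have hedges : (4 * k + 1) * (4 * k + 1 - 1) / 2 = 2 * selfDualGenus k + 8 * k := by
    obtain ⟨j, rfl⟩ : ∃ j, k = j + 1 := ⟨k - 1, by omega⟩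
    rw [selfDualGenus, show 4 * (j + 1) - 3 = 4 * j + 1 by omega, Nat.add_sub_cancel,
      Nat.div_eq_of_eq_mul_left (by norm_num)]
    ring
  simpa only [hgenus, hedges] using hK (4 * k + 1) (by omega) (by omega)

lemma apply_selfDualGenus_div_le (μ : ℕ → ℕ)
    (hK : ∀ s : ℕ, s % 4 = 1 → 5 ≤ s → μ ((s - 1) * (s - 4) / 4) ≤ s * (s - 1) / 2)
    {k : ℕ} (hk : 1 ≤ k) :
    (μ (selfDualGenus k) : ℝ) / selfDualGenus k ≤ 2 + 8 / k := by
  have hk0 : (0 : ℝ) < k := by exact_mod_cast hk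
  have hsq : (k : ℝ) * k ≤ selfDualGenus k := by exact_mod_cast mul_self_le_selfDualGenus k
  have hμ : (μ (selfDualGenus k) : ℝ) ≤ 2 * selfDualGenus k + 8 * k := by
    exact_mod_cast apply_selfDualGenus_le μ hK hk
  have hlin : 8 * (k : ℝ) ≤ 8 * selfDualGenus k / k := by
    rw [le_div_iff₀ hk0]
    linarith
  rw [div_le_iff₀ (by nlinarith), add_mul, div_mul_eq_mul_div]
  linarith

lemma tendsto_apply_selfDualGenus_div (μ : ℕ → ℕ) (hlow : ∀ g : ℕ, 2 * g ≤ μ g)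
    (hK : ∀ s : ℕ, s % 4 = 1 → 5 ≤ s → μ ((s - 1) * (s - 4) / 4) ≤ s * (s - 1) / 2) :
    Tendsto (fun k => (μ (selfDualGenus k) : ℝ) / selfDualGenus k) atTop (𝓝 2) := by
  have hupper : Tendsto (fun k : ℕ => 2 + 8 / (k : ℝ)) atTop (𝓝 2) := by
    simpa using tendsto_const_nhds.add (tendsto_const_div_atTop_nhds_zero_nat (8 : ℝ))
  refine tendsto_of_tendsto_of_tendsto_of_le_of_le' tendsto_const_nhds hupper ?_ ?_
  · filter_upwards [tendsto_selfDualGenus.eventually_ne_atTop 0] with k hk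
    rw [le_div_iff₀ (Nat.cast_pos.mpr (Nat.pos_of_ne_zero hk))]
    exact_mod_cast hlow _
  · filter_upwards [eventually_ge_atTop 1] with k hk
    exact apply_selfDualGenus_div_le μ hK hk

theorem two_genus_over_mu_tendsto_one_general (μ : ℕ → ℕ)
    (hlow : ∀ g : ℕ, 2 * g ≤ μ g)
    (hsub : ∀ g₁ g₂ : ℕ, μ (g₁ + g₂) ≤ μ g₁ + μ g₂)
    (hK : ∀ s : ℕ, s % 4 = 1 → 5 ≤ s → μ ((s - 1) * (s - 4) / 4) ≤ s * (s - 1) / 2) :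
    Tendsto (fun g : ℕ => (2 * g : ℝ) / (μ g : ℝ)) atTop (nhds 1) := by
  have hsubadd : Subadditive fun g => (μ g : ℝ) := fun m n => by
    simpa only [← Nat.cast_add, Nat.cast_le] using hsub m n
  have hbdd : BddBelow (Set.range fun g => (μ g : ℝ) / g) :=
    ⟨0, by rintro _ ⟨g, rfl⟩; positivity⟩
  have hratio := hsubadd.tendsto_div_of_tendsto_comp hbdd tendsto_selfDualGenus
    (tendsto_apply_selfDualGenus_div μ hlow hK)
  have hlim : Tendsto (fun g => 2 / ((μ g : ℝ) / g)) atTop (𝓝 (2 / 2)) :=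
    tendsto_const_nhds.div hratio two_ne_zero
  simpa only [div_self (two_ne_zero (α := ℝ)), div_div_eq_mul_div] using hlim

/-- **The minimal size of genus-`g` distance-3 topological codes satisfies
`2g/μ(gT,3) → 1`.**  Here `μ g` denotes `μ(gT, 3)`, the minimal number of edges of a
graph cell embedding in the genus-`g` orientable surface whose code has distance 3.
Hypotheses: the Euler-formula lower bound `μ(gT,3) ≥ 2g`; topological subadditivity
`μ((g₁+g₂)T,3) ≤ μ(g₁T,3) + μ(g₂T,3)`; the optimal regular toric code `μ(T,3) ≤ 10`;
and the self-dual embeddings of `K_s` (`s ≡ 1 (mod 4)`, `s ≥ 5`) giving distance-3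
codes with `n_s = s(s−1)/2` edges in genus `g_s = (s−1)(s−4)/4`.  Conclusion:
`lim_{g→∞} 2g / μ(gT,3) = 1`. -/
theorem two_genus_over_mu_tendsto_one (μ : ℕ → ℕ)
    (hlow : ∀ g : ℕ, 2 * g ≤ μ g)
    (hsub : ∀ g₁ g₂ : ℕ, μ (g₁ + g₂) ≤ μ g₁ + μ g₂)
    (htorus : μ 1 ≤ 10)
    (hK : ∀ s : ℕ, s % 4 = 1 → 5 ≤ s → μ ((s - 1) * (s - 4) / 4) ≤ s * (s - 1) / 2) :
    Tendsto (fun g : ℕ => (2 * g : ℝ) / (μ g : ℝ)) atTop (nhds 1) :=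
  two_genus_over_mu_tendsto_one_general μ hlow hsub hK
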